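/- arXiv:1906.05951 — 2 statements merged into one kernel-verified Lean document; each statement's English description precedes it below -/
import Mathlib

section
/- Let θ = (x,y,z,w) ∈ ℝ^4, g(θ) = (xy, xw, yz)ᵀ, and G(θ) = ∂g/∂θᵀ. For every θ at which G(θ) G(θ)ᵀ is invertible, T · g(θ)ᵀ [G(θ) G(θ)ᵀ]^{−1} g(θ) = T (w² + y²)(x² + z²) / (w² + x² + y² + z²). -/
open MeasureTheory Filter Topology Matrix

noncomputable section

/-- Evaluate a matrix of multivariate real polynomials at a point `x ∈ ℝ^p`. -/
def evalMat {q p : ℕ} (G : Matrix (Fin q) (Fin p) (MvPolynomial (Fin p) ℝ)) (x : Fin p → ℝ) :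
    Matrix (Fin q) (Fin p) ℝ :=
  Matrix.of fun i j => MvPolynomial.eval x (G i j)

/-- A matrix over a commutative ring has rank at least `k` if it has a `k × k` submatrix whose
determinant is nonzero (for polynomial matrices: a not-identically-zero polynomial). -/
def rankGe {m n R : Type*} [Fintype m] [Fintype n] [CommRing R]
    (G : Matrix m n R) (k : ℕ) : Prop :=
  ∃ (r : Fin k → m) (c : Fin k → n), Function.Injective r ∧ Function.Injective c ∧
    (G.submatrix r c).det ≠ 0

/-- `r` is the rank of the matrix `G` over a commutative ring: the largest dimension of a
square submatrix with nonzero determinant. -/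
def IsPolyRank {m n R : Type*} [Fintype m] [Fintype n] [CommRing R]
    (G : Matrix m n R) (r : ℕ) : Prop :=
  rankGe G r ∧ ¬ rankGe G (r + 1)

/-- The lowest degree of a nonzero homogeneous component of a multivariate polynomial. -/
def lowDeg {p : ℕ} (h : MvPolynomial (Fin p) ℝ) : ℕ :=
  sInf {d | MvPolynomial.homogeneousComponent d h ≠ 0}

/-- The minimal degree of a nonzero monomial among the entries of row `l` of `G`. -/
def rowDeg {q p : ℕ} (G : Matrix (Fin q) (Fin p) (MvPolynomial (Fin p) ℝ)) (l : Fin q) : ℕ :=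
  sInf {d | ∃ j, MvPolynomial.homogeneousComponent d (G l j) ≠ 0}

/-- `Ḡ`: the lowest-degree row matrix of `G`; row `l` consists of the homogeneous components of
degree `rowDeg G l` of the entries of row `l` of `G`. -/
def lowMat {q p : ℕ} (G : Matrix (Fin q) (Fin p) (MvPolynomial (Fin p) ℝ)) :
    Matrix (Fin q) (Fin p) (MvPolynomial (Fin p) ℝ) :=
  Matrix.of fun l j => MvPolynomial.homogeneousComponent (rowDeg G l) (G l j)

/-- Echelon form: the row degrees are nondecreasing (rows are stacked in blocks of equal degree
with strictly increasing degrees) and the rows of `Ḡ` are linearly independent as vectors of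
polynomial functions. -/
def IsEchelon {q p : ℕ} (G : Matrix (Fin q) (Fin p) (MvPolynomial (Fin p) ℝ)) : Prop :=
  Monotone (rowDeg G) ∧ LinearIndependent ℝ (fun l : Fin q => lowMat G l)

/-- The echelon scaling matrix `Δ_T = diag[T^{s̄_l/2}]`. -/
def scaleMat {q : ℕ} (s : Fin q → ℕ) (T : ℝ) : Matrix (Fin q) (Fin q) ℝ :=
  Matrix.diagonal fun l => T ^ ((s l : ℝ) / 2)

/-- The scaled matrix `M_T(y,U) = Δ_T G(T^{-1/2} y) U G(T^{-1/2} y)ᵀ Δ_T`. -/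
def MT {q p : ℕ} (G : Matrix (Fin q) (Fin p) (MvPolynomial (Fin p) ℝ))
    (U : Matrix (Fin p) (Fin p) ℝ) (T : ℝ) (y : Fin p → ℝ) : Matrix (Fin q) (Fin q) ℝ :=
  scaleMat (rowDeg G) T * evalMat G (fun i => T ^ (-(1 : ℝ) / 2) * y i) * U *
    (evalMat G (fun i => T ^ (-(1 : ℝ) / 2) * y i))ᵀ * scaleMat (rowDeg G) T

/-- `Ḡ(y) U Ḡ(y)ᵀ`. -/
def Bbar {q p : ℕ} (G : Matrix (Fin q) (Fin p) (MvPolynomial (Fin p) ℝ))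
    (U : Matrix (Fin p) (Fin p) ℝ) (y : Fin p → ℝ) : Matrix (Fin q) (Fin q) ℝ :=
  evalMat (lowMat G) y * U * (evalMat (lowMat G) y)ᵀ

/-- `lam` is the vector of eigenvalues of `M` arranged in decreasing order:
it is antitone and enumerates the roots of the characteristic polynomial with multiplicity. -/
def IsOrderedEigs {q : ℕ} (M : Matrix (Fin q) (Fin q) ℝ) (lam : Fin q → ℝ) : Prop :=
  Antitone lam ∧ M.charpoly = ∏ i, (Polynomial.X - Polynomial.C (lam i))

/-- The `k`-th elementary symmetric polynomial of `λ_1, …, λ_q`. -/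
def esymmVal {q : ℕ} (k : ℕ) (lam : Fin q → ℝ) : ℝ :=
  ∑ S ∈ Finset.powersetCard k (Finset.univ : Finset (Fin q)), ∏ i ∈ S, lam i

/-- `B(x,U) = G(x) U G(x)ᵀ` as a matrix of polynomials in `x`. -/
def BPoly {q p : ℕ} (G : Matrix (Fin q) (Fin p) (MvPolynomial (Fin p) ℝ))
    (U : Matrix (Fin p) (Fin p) ℝ) : Matrix (Fin q) (Fin q) (MvPolynomial (Fin p) ℝ) :=
  G * (U.map MvPolynomial.C : Matrix (Fin p) (Fin p) (MvPolynomial (Fin p) ℝ)) * Gᵀ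

/-- The coefficient `a_k(x,U)` of `λ^{q-k}` in the characteristic polynomial of `B(x,U)`,
as a polynomial in `x`. -/
def acoeff {q p : ℕ} (G : Matrix (Fin q) (Fin p) (MvPolynomial (Fin p) ℝ))
    (U : Matrix (Fin p) (Fin p) ℝ) (k : ℕ) : MvPolynomial (Fin p) ℝ :=
  (BPoly G U).charpoly.coeff (q - k)

/-- `m_k(U)`: the lowest degree of a nonzero homogeneous-in-`x` component of `a_k(x,U)`. -/
def mkU {q p : ℕ} (G : Matrix (Fin q) (Fin p) (MvPolynomial (Fin p) ℝ))
    (U : Matrix (Fin p) (Fin p) ℝ) (k : ℕ) : ℕ :=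
  lowDeg (acoeff G U k)

/-- `m_k = min_{Q ∈ F_p} m_k(Q)`. -/
def mkmin {q p : ℕ} (G : Matrix (Fin q) (Fin p) (MvPolynomial (Fin p) ℝ)) (k : ℕ) : ℕ :=
  sInf ((fun U => mkU G U k) '' {U : Matrix (Fin p) (Fin p) ℝ | U.IsSymm ∧ U.PosDef})

/-- The symmetric matrix built from the upper-triangular entries of `u`. -/
def symOfUpper {p : ℕ} (u : Fin p → Fin p → ℝ) : Matrix (Fin p) (Fin p) ℝ :=
  Matrix.of fun i j => if i ≤ j then u i j else u j i

/-- Principal minor of `M` with rows and columns in `S` retained. -/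
def pminor {q : ℕ} {R : Type*} [CommRing R] (M : Matrix (Fin q) (Fin q) R)
    (S : Finset (Fin q)) : R :=
  (M.submatrix (fun i : {a // a ∈ S} => (i : Fin q)) (fun i : {a // a ∈ S} => (i : Fin q))).det

/-- The Jacobian matrix `∂g/∂θᵀ` of a vector of polynomials. -/
def jacMat {q p : ℕ} (g : Fin q → MvPolynomial (Fin p) ℝ) :
    Matrix (Fin q) (Fin p) (MvPolynomial (Fin p) ℝ) :=
  Matrix.of fun l j => MvPolynomial.pderiv j (g l)

/-- The polynomial `f(θ̄ + ·)`. -/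
def shiftPoly {p : ℕ} (θbar : Fin p → ℝ) (f : MvPolynomial (Fin p) ℝ) : MvPolynomial (Fin p) ℝ :=
  MvPolynomial.bind₁ (fun i => MvPolynomial.X i + MvPolynomial.C (θbar i)) f

/-- Convergence in distribution of `E`-valued random elements to the law `μ`:
weak convergence tested against bounded continuous functions. -/
def TendstoInDist {Ω E : Type*} [MeasurableSpace Ω] [TopologicalSpace E] [MeasurableSpace E]
    (P : Measure Ω) (X : ℕ → Ω → E) (μ : Measure E) : Prop :=
  ∀ f : BoundedContinuousFunction E ℝ,
    Tendsto (fun T => ∫ ω, f (X T ω) ∂P) atTop (𝓝 (∫ x, f x ∂μ))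

/-- `μ` is the centered Gaussian law `N(0,V)` on `ℝ^p`: a probability measure all of whose
one-dimensional linear marginals are centered Gaussian with the prescribed variance. -/
def IsGaussianLaw {p : ℕ} (μ : Measure (Fin p → ℝ)) (V : Matrix (Fin p) (Fin p) ℝ) : Prop :=
  IsProbabilityMeasure μ ∧
    ∀ a : Fin p → ℝ,
      μ.map (fun x => ∑ i, a i * x i) =
        ProbabilityTheory.gaussianReal 0 (Real.toNNReal (∑ i, ∑ j, a i * V i j * a j))

/-- Convergence in probability to a constant. -/
def TendstoInProbConst {Ω E : Type*} [MeasurableSpace Ω] [PseudoMetricSpace E]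
    (P : Measure Ω) (X : ℕ → Ω → E) (c : E) : Prop :=
  ∀ ε : ℝ, 0 < ε → Tendsto (fun T => P {ω | ε ≤ dist (X T ω) c}) atTop (𝓝 0)

/-- Divergence to `+∞` in probability. -/
def TendstoInProbAtTop {Ω : Type*} [MeasurableSpace Ω]
    (P : Measure Ω) (X : ℕ → Ω → ℝ) : Prop :=
  ∀ C : ℝ, Tendsto (fun T => P {ω | X T ω ≤ C}) atTop (𝓝 0)

/-- Boundedness in probability (`O_p(1)`). -/
def BoundedInProb {Ω : Type*} [MeasurableSpace Ω]
    (P : Measure Ω) (X : ℕ → Ω → ℝ) : Prop :=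
  ∀ ε : ℝ, 0 < ε → ∃ C : ℝ, ∀ᶠ T in atTop, P {ω | C ≤ |X T ω|} ≤ ENNReal.ofReal ε

end

/-- Example 1, Wald statistic formula. For `θ = (x,y,z,w) ∈ ℝ⁴`,
`g(θ) = (xy, xw, yz)ᵀ` and `G = ∂g/∂θᵀ`, at every `θ` where `G(θ)G(θ)ᵀ` is invertible,
`T·g(θ)ᵀ[G(θ)G(θ)ᵀ]⁻¹ g(θ) = T (w² + y²)(x² + z²)/(w² + x² + y² + z²)`.
Here coordinates are indexed as `x = θ 0`, `y = θ 1`, `z = θ 2`, `w = θ 3`. -/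
theorem statement_11
    (g : Fin 3 → MvPolynomial (Fin 4) ℝ)
    (hgdef : g = ![MvPolynomial.X 0 * MvPolynomial.X 1, MvPolynomial.X 0 * MvPolynomial.X 3,
      MvPolynomial.X 1 * MvPolynomial.X 2])
    (θ : Fin 4 → ℝ)
    (hinv : IsUnit (evalMat (jacMat g) θ * (evalMat (jacMat g) θ)ᵀ).det) :
    ∀ T : ℝ,
      T * ((fun l => MvPolynomial.eval θ (g l)) ⬝ᵥ
          (evalMat (jacMat g) θ * (evalMat (jacMat g) θ)ᵀ)⁻¹.mulVec
            (fun l => MvPolynomial.eval θ (g l))) =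
        T * ((θ 3 ^ 2 + θ 1 ^ 2) * (θ 0 ^ 2 + θ 2 ^ 2) /
          (θ 3 ^ 2 + θ 0 ^ 2 + θ 1 ^ 2 + θ 2 ^ 2)) := by
  subst hgdef
  intro T
  set x := θ 0; set y := θ 1; set z := θ 2; set w := θ 3
  have hB : evalMat (jacMat ![MvPolynomial.X 0 * MvPolynomial.X 1,
      MvPolynomial.X 0 * MvPolynomial.X 3, MvPolynomial.X 1 * MvPolynomial.X 2]) θ *
      (evalMat (jacMat ![MvPolynomial.X 0 * MvPolynomial.X 1,
      MvPolynomial.X 0 * MvPolynomial.X 3, MvPolynomial.X 1 * MvPolynomial.X 2]) θ)ᵀ =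
      !![y^2 + x^2, y*w, x*z; y*w, w^2 + x^2, 0; x*z, 0, z^2 + y^2] := by
    have hG : evalMat (jacMat ![MvPolynomial.X 0 * MvPolynomial.X 1,
        MvPolynomial.X 0 * MvPolynomial.X 3, MvPolynomial.X 1 * MvPolynomial.X 2]) θ =
        !![y, x, 0, 0; w, 0, 0, x; 0, z, y, 0] := by
      ext i j
      fin_cases i <;> fin_cases j <;>
        simp [evalMat, jacMat, MvPolynomial.pderiv_X, Pi.single_apply, x, y, z, w]
    rw [hG]
    ext i j
    fin_cases i <;> fin_cases j <;>
      simp [Matrix.mul_apply, Fin.sum_univ_four, Matrix.vecHead, Matrix.vecTail] <;> ring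
  rw [hB] at hinv ⊢
  set B : Matrix (Fin 3) (Fin 3) ℝ :=
    !![y^2 + x^2, y*w, x*z; y*w, w^2 + x^2, 0; x*z, 0, z^2 + y^2] with hBdef
  have hdet : B.det = x^2 * y^2 * (w^2 + x^2 + y^2 + z^2) := by
    simp [hBdef, Matrix.det_fin_three]; ring
  have hdet' : B.det ≠ 0 := hinv.ne_zero
  rw [hdet] at hdet'
  have hx : x ≠ 0 := by intro h; apply hdet'; rw [h]; ring
  have hy : y ≠ 0 := by intro h; apply hdet'; rw [h]; ring
  have hs : w ^ 2 + x ^ 2 + y ^ 2 + z ^ 2 ≠ 0 := by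
    intro h; apply hdet'; rw [h]; ring
  set s : ℝ := w ^ 2 + x ^ 2 + y ^ 2 + z ^ 2 with hsdef
  set v : Fin 3 → ℝ :=
    ![(x^2*y^2 - z^2*w^2) / (x*y*s), w*(x^2+z^2) / (x*s), z*(w^2+y^2) / (y*s)] with hvdef
  have key : (fun l => MvPolynomial.eval θ
      (![MvPolynomial.X 0 * MvPolynomial.X 1, MvPolynomial.X 0 * MvPolynomial.X 3,
        MvPolynomial.X 1 * MvPolynomial.X 2] l)) = ![x*y, x*w, y*z] := by
    funext l; fin_cases l <;> simp [x, y, z, w]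
  have hBv : B.mulVec v = ![x*y, x*w, y*z] := by
    funext l
    fin_cases l <;>
      · simp [hBdef, hvdef, Matrix.mulVec, dotProduct, Fin.sum_univ_three]
        field_simp
        ring
  have hsol : B⁻¹.mulVec ![x*y, x*w, y*z] = v := by
    rw [← hBv, Matrix.mulVec_mulVec, Matrix.nonsing_inv_mul B hinv, Matrix.one_mulVec]
  rw [key, hsol]
  have hdot : (![x*y, x*w, y*z] ⬝ᵥ v) = (w^2 + y^2) * (x^2 + z^2) / s := by
    simp [hvdef, dotProduct, Fin.sum_univ_three]
    field_simp
    ring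
  rw [hdot]
end

section
/- Let G(x) be a q×p polynomial matrix with lowest-degree row matrix Ḡ(x) in echelon form with scaling Δ_T, let U ∈ F_p, and set M_T(y,U) = Δ_T G(T^{−1/2}y) U G(T^{−1/2}y)ᵀ Δ_T. Then for every y ∈ ℝ^p, every k ∈ {1,…,q}, and every choice of indices {i_1,…,i_k} ⊆ {1,…,q}, the determinant of the k×k principal submatrix det[M_T(y,U)^{{i_1,…,i_k}}] converges as T → ∞ to det[(Ḡ(y) U Ḡ(y)ᵀ)^{{i_1,…,i_k}}]; moreover, if r denotes the rank of the polynomial matrix Ḡ, then for k > r these limits are zero for every y, while for k ≤ r at least one such limit is a not-identically-zero (hence almost everywhere nonzero) polynomial function of y. -/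
open MeasureTheory Filter Topology Matrix

-- ===== auxiliary lemmas =====

theorem rankGe_of_succ {m n R : Type*} [Fintype m] [Fintype n] [CommRing R]
    {G : Matrix m n R} {k : ℕ} (h : rankGe G (k + 1)) : rankGe G k := by
  by_contra hk
  unfold rankGe at hk
  push_neg at hk
  obtain ⟨r, c, hr, hc, hdet⟩ := h
  apply hdet
  rw [Matrix.det_succ_row_zero]
  refine Finset.sum_eq_zero fun j _ => ?_
  rw [Matrix.submatrix_submatrix,
    hk (r ∘ Fin.succ) (c ∘ j.succAbove) (hr.comp (Fin.succ_injective _))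
      (hc.comp (Fin.succAbove_right_injective))]
  ring

theorem rankGe_down {m n R : Type*} [Fintype m] [Fintype n] [CommRing R] [Nontrivial R]
    {G : Matrix m n R} : ∀ k, rankGe G k → ∀ j ≤ k, rankGe G j := by
  intro k
  induction k with
  | zero =>
    intro h j hj
    simpa [Nat.le_zero.mp hj] using h
  | succ k ih =>
    intro h j hj
    rcases Nat.eq_or_lt_of_le hj with rfl | hlt
    · exact h
    · exact ih (rankGe_of_succ h) j (Nat.lt_succ_iff.mp hlt)

theorem eval_mul_of_isHomogeneous {p : ℕ} (φ : MvPolynomial (Fin p) ℝ) {n : ℕ}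
    (hφ : φ.IsHomogeneous n) (c : ℝ) (y : Fin p → ℝ) :
    MvPolynomial.eval (fun i => c * y i) φ = c ^ n * MvPolynomial.eval y φ := by
  rw [MvPolynomial.eval_eq, MvPolynomial.eval_eq, Finset.mul_sum]
  refine Finset.sum_congr rfl fun d hd => ?_
  rw [MvPolynomial.mem_support_iff] at hd
  have hdeg : ∑ i ∈ d.support, d i = n := by
    have := hφ hd
    simpa [Finsupp.weight_apply, Finsupp.sum] using this
  calc MvPolynomial.coeff d φ * ∏ i ∈ d.support, (c * y i) ^ d i
      = MvPolynomial.coeff d φ * ((∏ i ∈ d.support, c ^ d i) *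
        ∏ i ∈ d.support, (y i) ^ d i) := by
        rw [← Finset.prod_mul_distrib]
        congr 1
        exact Finset.prod_congr rfl fun i _ => mul_pow c (y i) (d i)
    _ = c ^ n * (MvPolynomial.coeff d φ * ∏ i ∈ d.support, (y i) ^ d i) := by
        rw [Finset.prod_pow_eq_pow_sum, hdeg]; ring

theorem tendsto_scaled_eval {p : ℕ} (h : MvPolynomial (Fin p) ℝ) (s : ℕ)
    (hlow : ∀ d < s, MvPolynomial.homogeneousComponent d h = 0) (y : Fin p → ℝ) :
    Tendsto (fun T : ℕ => (T : ℝ) ^ ((s : ℝ) / 2) *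
        MvPolynomial.eval (fun i => (T : ℝ) ^ (-(1 : ℝ) / 2) * y i) h) atTop
      (𝓝 (MvPolynomial.eval y (MvPolynomial.homogeneousComponent s h))) := by
  classical
  set N := max h.totalDegree s with hN
  have hdecomp : ∑ d ∈ Finset.range (N + 1), MvPolynomial.homogeneousComponent d h = h := by
    have h1 : ∑ d ∈ Finset.range (h.totalDegree + 1), MvPolynomial.homogeneousComponent d h
        = ∑ d ∈ Finset.range (N + 1), MvPolynomial.homogeneousComponent d h :=
      Finset.sum_subset (Finset.range_subset_range.mpr (Nat.succ_le_succ (le_max_left _ _)))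
        (fun d hd hd2 => MvPolynomial.homogeneousComponent_eq_zero _ _ (by
          simp only [Finset.mem_range] at hd hd2
          omega))
    rw [← h1, MvPolynomial.sum_homogeneousComponent]
  have heq : ∀ᶠ T : ℕ in atTop,
      (T : ℝ) ^ ((s : ℝ) / 2) * MvPolynomial.eval (fun i => (T : ℝ) ^ (-(1 : ℝ) / 2) * y i) h
        = ∑ d ∈ Finset.range (N + 1),
            (T : ℝ) ^ (((s : ℝ) - d) / 2) *
              MvPolynomial.eval y (MvPolynomial.homogeneousComponent d h) := by
    filter_upwards [Filter.eventually_ge_atTop 1] with T hT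
    have ht : (0 : ℝ) < T := by exact_mod_cast Nat.lt_of_lt_of_le Nat.zero_lt_one hT
    conv_lhs => rw [← hdecomp]
    rw [map_sum, Finset.mul_sum]
    refine Finset.sum_congr rfl fun d _ => ?_
    rw [eval_mul_of_isHomogeneous _ (MvPolynomial.homogeneousComponent_isHomogeneous d h) _ y]
    have hpow : ((T : ℝ) ^ (-(1 : ℝ) / 2)) ^ d = (T : ℝ) ^ ((-(1 : ℝ) / 2) * d) := by
      rw [← Real.rpow_natCast ((T : ℝ) ^ (-(1 : ℝ) / 2)) d, ← Real.rpow_mul ht.le]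
    rw [hpow, ← mul_assoc, ← Real.rpow_add ht]
    congr 2
    ring
  have hlim : Tendsto (fun T : ℕ => ∑ d ∈ Finset.range (N + 1),
      (T : ℝ) ^ (((s : ℝ) - d) / 2) *
        MvPolynomial.eval y (MvPolynomial.homogeneousComponent d h)) atTop
      (𝓝 (MvPolynomial.eval y (MvPolynomial.homogeneousComponent s h))) := by
    have hrw : MvPolynomial.eval y (MvPolynomial.homogeneousComponent s h)
        = ∑ d ∈ Finset.range (N + 1), (if d = s then
            MvPolynomial.eval y (MvPolynomial.homogeneousComponent s h) else 0) := by
      rw [Finset.sum_ite_eq' (Finset.range (N + 1)) s]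
      rw [if_pos]
      simp only [Finset.mem_range, hN]
      exact Nat.lt_succ_of_le (le_max_right _ _)
    rw [hrw]
    refine tendsto_finset_sum _ fun d _ => ?_
    rcases lt_trichotomy d s with hds | rfl | hds
    · rw [if_neg hds.ne, hlow d hds]
      simp only [map_zero, mul_zero]
      exact tendsto_const_nhds
    · rw [if_pos rfl]
      refine Tendsto.congr' ?_ tendsto_const_nhds
      refine Filter.Eventually.of_forall fun T => ?_
      norm_num
    · rw [if_neg hds.ne']
      have hpos : (0 : ℝ) < ((d : ℝ) - s) / 2 := by
        have : (s : ℝ) < d := by exact_mod_cast hds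
        linarith
      have h1 : Tendsto (fun x : ℝ => x ^ (((s : ℝ) - d) / 2)) atTop (𝓝 0) := by
        have := tendsto_rpow_neg_atTop hpos
        convert this using 2 with x
        ring_nf
      have h2 : Tendsto (fun T : ℕ => ((T : ℝ)) ^ (((s : ℝ) - d) / 2)) atTop (𝓝 0) :=
        h1.comp tendsto_natCast_atTop_atTop
      simpa using h2.mul_const (MvPolynomial.eval y (MvPolynomial.homogeneousComponent d h))
  refine hlim.congr' ?_
  filter_upwards [heq] with T hT
  exact hT.symm

set_option maxHeartbeats 1000000 in
theorem mvpoly_ae_ne_zero : ∀ {p : ℕ} (f : MvPolynomial (Fin p) ℝ), f ≠ 0 →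
    ∀ᵐ y ∂(volume : Measure (Fin p → ℝ)), MvPolynomial.eval y f ≠ 0 := by
  intro p
  induction p with
  | zero =>
    intro f hf
    obtain ⟨a, rfl⟩ := MvPolynomial.C_surjective (Fin 0) f
    refine Filter.Eventually.of_forall fun y => ?_
    simp only [MvPolynomial.eval_C]
    intro h
    exact hf (by rw [h, map_zero])
  | succ n ih =>
    intro f hf
    set F := MvPolynomial.finSuccEquiv ℝ n f with hF
    have hFne : F ≠ 0 := fun h0 => hf
      ((MvPolynomial.finSuccEquiv ℝ n).injective (by rw [← hF, h0, map_zero]))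
    have hgne : F.coeff F.natDegree ≠ 0 := by
      rw [← Polynomial.leadingCoeff]
      exact Polynomial.leadingCoeff_ne_zero.mpr hFne
    set W : Set ((Fin n → ℝ) × ℝ) :=
      {z | MvPolynomial.eval (Fin.cons z.2 z.1) f = 0} with hW
    have hWm : MeasurableSet W := by
      have hc2 : Continuous fun z : (Fin n → ℝ) × ℝ =>
          MvPolynomial.eval (Fin.cons z.2 z.1) f := by
        refine (MvPolynomial.continuous_eval f).comp ?_
        refine continuous_pi fun i => ?_
        refine Fin.cases ?_ (fun j => ?_) i
        · simpa using (continuous_snd : Continuous fun z : (Fin n → ℝ) × ℝ => z.2)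
        · simpa using (show Continuous fun z : (Fin n → ℝ) × ℝ => z.1 j from
            (continuous_apply j).comp
            (continuous_fst : Continuous fun z : (Fin n → ℝ) × ℝ => z.1))
      exact hc2.measurable (measurableSet_singleton 0)
    have hWnull : ((volume : Measure (Fin n → ℝ)).prod (volume : Measure ℝ)) W = 0 := by
      rw [MeasureTheory.Measure.measure_prod_null hWm]
      filter_upwards [ih _ hgne] with s hs
      have hpoly : F.map (MvPolynomial.eval s) ≠ 0 := by
        intro h0
        apply hs
        have := congrArg (fun P => Polynomial.coeff P F.natDegree) h0
        simpa [Polynomial.coeff_map] using this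
      have hfin : {a : ℝ | MvPolynomial.eval (Fin.cons a s) f = 0}.Finite := by
        refine (Polynomial.finite_setOf_isRoot hpoly).subset fun a ha => ?_
        simp only [Set.mem_setOf_eq] at ha ⊢
        rw [Polynomial.IsRoot, ← MvPolynomial.eval_eq_eval_mv_eval']
        exact ha
      simp only [Pi.zero_apply]
      exact hfin.measure_zero _
    have hZnull : (volume : Measure (ℝ × (Fin n → ℝ))) (Prod.swap ⁻¹' W) = 0 := by
      rw [MeasureTheory.Measure.volume_eq_prod]
      rw [(MeasureTheory.Measure.measurePreserving_swap).measure_preimage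
        hWm.nullMeasurableSet]
      exact hWnull
    have hmain : (volume : Measure (Fin (n+1) → ℝ))
        {y | MvPolynomial.eval y f = 0} = 0 := by
      have he := MeasureTheory.volume_preserving_piFinSuccAbove
        (fun _ : Fin (n + 1) => ℝ) 0
      have hset : {y : Fin (n+1) → ℝ | MvPolynomial.eval y f = 0}
          = (MeasurableEquiv.piFinSuccAbove (fun _ : Fin (n+1) => ℝ) 0) ⁻¹'
            (Prod.swap ⁻¹' W) := by
        ext y
        simp only [Set.mem_setOf_eq, Set.mem_preimage, hW,
          MeasurableEquiv.piFinSuccAbove_apply, Prod.swap]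
        have hcons : Fin.cons (((Fin.insertNthEquiv (fun _ => ℝ) 0).symm y).1)
            (((Fin.insertNthEquiv (fun _ => ℝ) 0).symm y).2) = y := by
          have := (Fin.insertNthEquiv (fun _ : Fin (n+1) => ℝ) 0).apply_symm_apply y
          rw [Fin.insertNthEquiv_zero] at this
          exact this
        rw [hcons]
      rw [hset, he.measure_preimage ((hWm.preimage measurable_swap).nullMeasurableSet)]
      exact hZnull
    rw [MeasureTheory.ae_iff]
    simpa [not_not] using hmain

theorem submatrix_mul_mul_transpose {q p : ℕ} {I : Type*} [Fintype I]
    (N : Matrix (Fin q) (Fin p) ℝ) (U : Matrix (Fin p) (Fin p) ℝ) (ρ : I → Fin q) :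
    (N * U * Nᵀ).submatrix ρ ρ = N.submatrix ρ id * U * (N.submatrix ρ id)ᵀ := by
  ext i j
  simp only [Matrix.submatrix_apply, Matrix.mul_apply, Matrix.transpose_apply, id_eq]

theorem pminor_eq_det {q p k : ℕ} (N : Matrix (Fin q) (Fin p) ℝ)
    (U : Matrix (Fin p) (Fin p) ℝ) (S : Finset (Fin q)) (hS : S.card = k)
    (ρ : Fin k → Fin q) (hmem : ∀ i, ρ i ∈ S) (hinj : Function.Injective ρ) :
    pminor (N * U * Nᵀ) S = ((N.submatrix ρ id) * U * (N.submatrix ρ id)ᵀ).det := by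
  classical
  have hbij : Function.Bijective (fun i : Fin k => (⟨ρ i, hmem i⟩ : {a // a ∈ S})) := by
    rw [Fintype.bijective_iff_injective_and_card]
    refine ⟨fun a b hab => hinj (congrArg Subtype.val hab), ?_⟩
    simp [Fintype.card_coe, hS]
  let e := Equiv.ofBijective _ hbij
  unfold pminor
  rw [← Matrix.det_submatrix_equiv_self e, Matrix.submatrix_submatrix,
    ← submatrix_mul_mul_transpose]
  rfl

theorem MT_eq {q p : ℕ} (G : Matrix (Fin q) (Fin p) (MvPolynomial (Fin p) ℝ))
    (U : Matrix (Fin p) (Fin p) ℝ) (T : ℝ) (y : Fin p → ℝ) :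
    MT G U T y =
      (scaleMat (rowDeg G) T * evalMat G (fun i => T ^ (-(1 : ℝ) / 2) * y i)) * U *
        (scaleMat (rowDeg G) T * evalMat G (fun i => T ^ (-(1 : ℝ) / 2) * y i))ᵀ := by
  unfold MT scaleMat
  rw [Matrix.transpose_mul, Matrix.diagonal_transpose]
  simp only [Matrix.mul_assoc]

theorem exists_cols {k P : ℕ} (A : Matrix (Fin k) (Fin P) ℝ)
    (h : LinearIndependent ℝ (fun i => A i)) :
    ∃ c : Fin k → Fin P, Function.Injective c ∧ (A.submatrix id c).det ≠ 0 := by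
  classical
  have hrank : A.rank = k := by
    have := h.rank_matrix (M := A)
    simpa using this
  have hspan : Submodule.span ℝ (Set.range Aᵀ) = ⊤ := by
    apply Submodule.eq_top_of_finrank_eq
    rw [show Set.range Aᵀ = Set.range A.col from rfl, ← Matrix.rank_eq_finrank_span_cols, hrank]
    simp
  obtain ⟨b, hbsub, hbspan, hbind⟩ := exists_linearIndependent ℝ (Set.range Aᵀ)
  rw [hspan] at hbspan
  have hfin : b.Finite := hbind.setFinite
  haveI := hfin.fintype
  let B : Module.Basis b ℝ (Fin k → ℝ) := Module.Basis.mk hbind (by rw [Subtype.range_coe, hbspan])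
  have hcard : Fintype.card b = k := by
    have := Module.finrank_eq_card_basis B
    simpa using this.symm
  let e : Fin k ≃ b := (Fintype.equivFinOfCardEq hcard).symm
  choose cfun hcfun using fun x : b => hbsub x.2
  refine ⟨cfun ∘ e, ?_, ?_⟩
  · intro a b' hab
    apply e.injective
    apply Subtype.ext
    rw [← hcfun (e a), ← hcfun (e b')]
    simp only [Function.comp_apply] at hab
    rw [hab]
  · have hcols : LinearIndependent ℝ (fun i : Fin k => (A.submatrix id (cfun ∘ e))ᵀ i) := by
      have heq : (fun i : Fin k => (A.submatrix id (cfun ∘ e))ᵀ i)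
          = fun i => ((e i : Fin k → ℝ)) := by
        funext i
        rw [← hcfun (e i)]
        rfl
      rw [heq]
      exact hbind.comp e e.injective
    have hu : IsUnit (A.submatrix id (cfun ∘ e))ᵀ :=
      Matrix.linearIndependent_rows_iff_isUnit.mp hcols
    have hdet : IsUnit (A.submatrix id (cfun ∘ e))ᵀ.det :=
      (Matrix.isUnit_iff_isUnit_det _).mp hu
    rw [Matrix.det_transpose] at hdet
    exact hdet.ne_zero

theorem det_mulUmul_ne_zero {P : ℕ} {I : Type*} [Fintype I] [DecidableEq I]
    (A : Matrix I (Fin P) ℝ) {U : Matrix (Fin P) (Fin P) ℝ} (hU : U.PosDef)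
    (h : LinearIndependent ℝ (fun i => A i)) :
    (A * U * Aᵀ).det ≠ 0 := by
  rw [Ne, ← Matrix.exists_mulVec_eq_zero_iff]
  rintro ⟨v, hv, hAv⟩
  have hw : v ᵥ* A = 0 := by
    by_contra hw
    have h2 := hU.dotProduct_mulVec_pos hw
    have h1 : (v ᵥ* A) ⬝ᵥ (U *ᵥ (v ᵥ* A)) = 0 := by
      have h0 : v ⬝ᵥ ((A * U * Aᵀ) *ᵥ v) = 0 := by rw [hAv, dotProduct_zero]
      rw [← Matrix.mulVec_mulVec, ← Matrix.mulVec_mulVec, dotProduct_mulVec v A,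
        Matrix.mulVec_transpose] at h0
      exact h0
    rw [star_trivial] at h2
    rw [h1] at h2
    exact lt_irrefl 0 h2
  apply hv
  have hli := Fintype.linearIndependent_iff.mp h v ?_
  · funext i; exact hli i
  · funext j
    have := congrFun hw j
    simpa [Matrix.vecMul, dotProduct, mul_comm] using this

theorem det_mulUmul_eq_zero {P : ℕ} {I : Type*} [Fintype I] [DecidableEq I]
    (A : Matrix I (Fin P) ℝ) (U : Matrix (Fin P) (Fin P) ℝ)
    (h : ¬ LinearIndependent ℝ (fun i => A i)) :
    (A * U * Aᵀ).det = 0 := by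
  rw [← Matrix.exists_vecMul_eq_zero_iff]
  obtain ⟨g, hsum, i, hgi⟩ := Fintype.not_linearIndependent_iff.mp h
  refine ⟨g, fun h0 => hgi (by rw [h0]; rfl), ?_⟩
  have hgA : g ᵥ* A = 0 := by
    funext j
    have := congrFun hsum j
    simpa [Matrix.vecMul, dotProduct, Finset.sum_apply, mul_comm] using this
  rw [← Matrix.vecMul_vecMul, ← Matrix.vecMul_vecMul, hgA, Matrix.zero_vecMul,
    Matrix.zero_vecMul]

theorem rows_linIndep_of_det_ne_zero {q p r : ℕ} (N : Matrix (Fin q) (Fin p) ℝ)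
    (rmap : Fin r → Fin q) (cmap : Fin r → Fin p)
    (hdet : (N.submatrix rmap cmap).det ≠ 0) :
    LinearIndependent ℝ (fun i : Fin r => N (rmap i)) := by
  have h1 : LinearIndependent ℝ (fun i : Fin r => (N.submatrix rmap cmap) i) :=
    Matrix.linearIndependent_rows_iff_isUnit.mpr
      ((Matrix.isUnit_iff_isUnit_det _).mpr (isUnit_iff_ne_zero.mpr hdet))
  apply LinearIndependent.of_comp (LinearMap.funLeft ℝ ℝ cmap)
  exact h1

theorem hc_rowDeg_zero {q p : ℕ} (G : Matrix (Fin q) (Fin p) (MvPolynomial (Fin p) ℝ))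
    (l : Fin q) (j : Fin p) {d : ℕ} (hd : d < rowDeg G l) :
    MvPolynomial.homogeneousComponent d (G l j) = 0 := by
  by_contra hne
  have hmem : d ∈ {d | ∃ j, MvPolynomial.homogeneousComponent d (G l j) ≠ 0} := ⟨j, hne⟩
  have := Nat.sInf_le hmem
  unfold rowDeg at hd
  omega

theorem tendsto_FT {q p : ℕ} (G : Matrix (Fin q) (Fin p) (MvPolynomial (Fin p) ℝ))
    (y : Fin p → ℝ) :
    Tendsto (fun T : ℕ => scaleMat (rowDeg G) (T : ℝ) *
        evalMat G (fun i => (T : ℝ) ^ (-(1 : ℝ) / 2) * y i)) atTop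
      (𝓝 (evalMat (lowMat G) y)) := by
  apply tendsto_pi_nhds.mpr
  intro l
  apply tendsto_pi_nhds.mpr
  intro j
  have hentry : ∀ T : ℕ,
      (scaleMat (rowDeg G) (T : ℝ) * evalMat G (fun i => (T : ℝ) ^ (-(1 : ℝ) / 2) * y i)) l j
        = (T : ℝ) ^ ((rowDeg G l : ℝ) / 2) *
            MvPolynomial.eval (fun i => (T : ℝ) ^ (-(1 : ℝ) / 2) * y i) (G l j) := by
    intro T
    simp [scaleMat, evalMat, Matrix.diagonal_mul]
  simp only [hentry]
  exact tendsto_scaled_eval (G l j) (rowDeg G l)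
    (fun d hd => hc_rowDeg_zero G l j hd) y

theorem part1_continuous {q p : ℕ} (U : Matrix (Fin p) (Fin p) ℝ) (S : Finset (Fin q)) :
    Continuous fun A : Matrix (Fin q) (Fin p) ℝ => pminor (A * U * Aᵀ) S := by
  unfold pminor
  exact (((continuous_id.matrix_mul continuous_const).matrix_mul
    continuous_id.matrix_transpose).matrix_submatrix _ _).matrix_det


/-- With `Ḡ` in echelon form and scaling `Δ_T`: for every `y`, every
symmetric positive definite `U`, every `k ∈ {1,…,q}` and every size-`k` index set `S`, the
principal minor `det[M_T(y,U)^{S}]` converges to `det[(Ḡ(y) U Ḡ(y)ᵀ)^{S}]` as `T → ∞`;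
moreover, with `r` the rank of the polynomial matrix `Ḡ`, for `k > r` these limits vanish for
every `y`, while for `k ≤ r` at least one of them is nonzero for almost every `y`. -/
theorem statement_15 {q p : ℕ}
    (G : Matrix (Fin q) (Fin p) (MvPolynomial (Fin p) ℝ))
    (hech : IsEchelon G)
    (r : ℕ) (hr : IsPolyRank (lowMat G) r)
    (U : Matrix (Fin p) (Fin p) ℝ) (hUsymm : U.IsSymm) (hUpos : U.PosDef) :
    (∀ (y : Fin p → ℝ), ∀ k ∈ Finset.Icc 1 q, ∀ S : Finset (Fin q), S.card = k →
      Tendsto (fun T : ℕ => pminor (MT G U (T : ℝ) y) S) atTop (𝓝 (pminor (Bbar G U y) S))) ∧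
    (∀ k ∈ Finset.Icc 1 q, r < k →
      ∀ (y : Fin p → ℝ) (S : Finset (Fin q)), S.card = k → pminor (Bbar G U y) S = 0) ∧
    (∀ k ∈ Finset.Icc 1 q, k ≤ r →
      ∃ S : Finset (Fin q), S.card = k ∧
        ∀ᵐ y ∂(volume : Measure (Fin p → ℝ)), pminor (Bbar G U y) S ≠ 0) := by
  classical
  refine ⟨?_, ?_, ?_⟩
  · -- part 1: convergence of principal minors
    intro y k hk S hS
    have hF := tendsto_FT G y
    have hcont := part1_continuous U S
    have hlim := (hcont.tendsto (evalMat (lowMat G) y)).comp hF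
    refine Tendsto.congr ?_ hlim
    intro T
    simp only [Function.comp_apply]
    rw [MT_eq]
  · -- part 2: minors of size > r vanish identically
    intro k hk hrk y S hS
    have hcardk : Fintype.card {a // a ∈ S} = k := by
      simp [Fintype.card_coe, hS]
    let e : Fin k ≃ {a // a ∈ S} := (Fintype.equivFinOfCardEq hcardk).symm
    set ρ : Fin k → Fin q := fun i => ((e i : {a // a ∈ S}) : Fin q) with hρ
    have hmem : ∀ i, ρ i ∈ S := fun i => (e i).2
    have hinj : Function.Injective ρ := fun a b hab => e.injective (Subtype.ext hab)
    set N := evalMat (lowMat G) y with hN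
    have hBb : Bbar G U y = N * U * Nᵀ := rfl
    rw [hBb, pminor_eq_det N U S hS ρ hmem hinj]
    by_contra hne
    have hli : LinearIndependent ℝ (fun i => (N.submatrix ρ id) i) := by
      by_contra hdep
      exact hne (det_mulUmul_eq_zero _ U hdep)
    obtain ⟨c, hcinj, hcdet⟩ := exists_cols (N.submatrix ρ id) hli
    have hpoly : ((lowMat G).submatrix ρ c).det ≠ 0 := by
      intro h0
      apply hcdet
      have hmap : ((N.submatrix ρ id).submatrix id c)
          = ((lowMat G).submatrix ρ c).map (MvPolynomial.eval y) := by
        ext i jj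
        rfl
      rw [hmap, ← RingHom.mapMatrix_apply, ← RingHom.map_det, h0, map_zero]
    have hge : rankGe (lowMat G) k := ⟨ρ, c, hinj, hcinj, hpoly⟩
    exact hr.2 (rankGe_down k hge (r + 1) hrk)
  · -- part 3: for k ≤ r there is an a.e. nonvanishing minor
    intro k hk hkr
    obtain ⟨rmap, cmap, hrinj, hcinj, hdet⟩ := hr.1
    set ρ : Fin k → Fin q := rmap ∘ Fin.castLE hkr with hρ
    have hρinj : Function.Injective ρ := hrinj.comp (Fin.castLE_injective hkr)
    have hScard : (Finset.image ρ Finset.univ).card = k := by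
      rw [Finset.card_image_of_injective _ hρinj, Finset.card_univ, Fintype.card_fin]
    refine ⟨Finset.image ρ Finset.univ, hScard, ?_⟩
    filter_upwards [mvpoly_ae_ne_zero _ hdet] with y hy
    set N := evalMat (lowMat G) y with hN
    have hdety : (N.submatrix rmap cmap).det ≠ 0 := by
      intro h0
      apply hy
      have hmap : (N.submatrix rmap cmap)
          = ((lowMat G).submatrix rmap cmap).map (MvPolynomial.eval y) := by
        ext i j
        rfl
      rw [RingHom.map_det, RingHom.mapMatrix_apply, ← hmap, h0]
    have hrows := rows_linIndep_of_det_ne_zero N rmap cmap hdety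
    have hrowsk : LinearIndependent ℝ (fun i : Fin k => N (ρ i)) :=
      hrows.comp (Fin.castLE hkr) (Fin.castLE_injective hkr)
    have hmem : ∀ i, ρ i ∈ Finset.image ρ Finset.univ :=
      fun i => Finset.mem_image_of_mem _ (Finset.mem_univ i)
    have hBb : Bbar G U y = N * U * Nᵀ := rfl
    rw [hBb, pminor_eq_det N U _ hScard ρ hmem hρinj]
    exact det_mulUmul_ne_zero _ hUpos hrowsk
end
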